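/- arXiv:2411.11655 — 4 statements merged into one kernel-verified Lean document; each statement's English description precedes it below -/
import Mathlib

section
/- Let μ ∈ (0,1). Then ∫_0^{π/2} (4/sin²ψ) · [ (1/(2μ² sin ψ)) · log( (1 + μ sin ψ)/(1 − μ sin ψ) ) − 1/μ ] dψ = π ( arcsin(μ)/μ² − √(1−μ²)/μ ). -/
/-!
Write the bracket as `(4 / μ²) ∫₀^μ m² / (1 - m² sin² ψ) dm` (an elementary antiderivative in `m`)
and swap the integrals. The inner integral is then the classical
`∫₀^{π/2} dψ / (1 - m² sin² ψ) = π / (2 √(1 - m²))`, which leaves the elementary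
`(2π / μ²) ∫₀^μ m² / √(1 - m²) dm`.
-/

open Real intervalIntegral Set

lemma cos_sq_add_mul_sin_sq_pos {a : ℝ} (ha : 0 < a) (ψ : ℝ) : 0 < cos ψ ^ 2 + a * sin ψ ^ 2 := by
  have := sin_sq_add_cos_sq ψ
  rcases le_total a 1 with h | h <;> nlinarith [sq_nonneg (sin ψ), sq_nonneg (cos ψ)]

lemma one_sub_mul_sin_sq_pos {k : ℝ} (hk : k < 1) (ψ : ℝ) : 0 < 1 - k * sin ψ ^ 2 := by
  rcases le_total k 0 with hk0 | hk0
  · nlinarith [sq_nonneg (sin ψ)]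
  · nlinarith [sin_sq_le_one ψ]

lemma abs_le_abs_of_mem_uIcc_zero {x y : ℝ} (hx : x ∈ uIcc 0 y) : |x| ≤ |y| := by
  simpa using abs_sub_left_of_mem_uIcc hx

lemma sq_lt_one_of_mem_uIcc_zero {x y : ℝ} (hx : x ∈ uIcc 0 y) (hy : |y| < 1) : x ^ 2 < 1 :=
  (sq_lt_one_iff_abs_lt_one x).mpr ((abs_le_abs_of_mem_uIcc_zero hx).trans_lt hy)

/-- A branch of `arctan (c * tan ψ)` that is continuous on all of `ℝ`: the arctangent term is
`arctan (c * tan ψ) - ψ`, whose tangent is `(c - 1) tan ψ / (1 + c tan² ψ)`. -/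
noncomputable def arctanMulTan (c ψ : ℝ) : ℝ :=
  ψ + arctan ((c - 1) * sin ψ * cos ψ / (cos ψ ^ 2 + c * sin ψ ^ 2))

lemma arctanMulTan_zero (c : ℝ) : arctanMulTan c 0 = 0 := by
  simp [arctanMulTan]

lemma arctanMulTan_pi_div_two (c : ℝ) : arctanMulTan c (π / 2) = π / 2 := by
  simp [arctanMulTan]

lemma hasDerivAt_arctanMulTan {c : ℝ} (hc : 0 < c) (ψ : ℝ) :
    HasDerivAt (arctanMulTan c) (c / (cos ψ ^ 2 + c ^ 2 * sin ψ ^ 2)) ψ := by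
  have hD := cos_sq_add_mul_sin_sq_pos hc ψ
  have hD2 := cos_sq_add_mul_sin_sq_pos (pow_pos hc 2) ψ
  have hN : HasDerivAt (fun ψ => (c - 1) * sin ψ * cos ψ)
      ((c - 1) * (cos ψ ^ 2 - sin ψ ^ 2)) ψ := by
    refine (((hasDerivAt_sin ψ).const_mul (c - 1)).mul (hasDerivAt_cos ψ)).congr_deriv ?_
    ring
  have hDd : HasDerivAt (fun ψ => cos ψ ^ 2 + c * sin ψ ^ 2)
      (2 * (c - 1) * sin ψ * cos ψ) ψ := by
    refine (((hasDerivAt_cos ψ).pow 2).add (((hasDerivAt_sin ψ).pow 2).const_mul c)).congr_deriv ?_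
    ring
  refine ((hasDerivAt_id ψ).add (hN.div hDd hD.ne').arctan).congr_deriv ?_
  have hSC := sin_sq_add_cos_sq ψ
  have h_one_add_sq : 1 + ((c - 1) * sin ψ * cos ψ / (cos ψ ^ 2 + c * sin ψ ^ 2)) ^ 2
      = (cos ψ ^ 2 + c ^ 2 * sin ψ ^ 2) / (cos ψ ^ 2 + c * sin ψ ^ 2) ^ 2 := by
    field_simp
    linear_combination (cos ψ ^ 2 + c ^ 2 * sin ψ ^ 2) * hSC
  simp only [Pi.div_apply, h_one_add_sq]
  field_simp
  linear_combination ((c - 1) * (cos ψ ^ 2 - c * sin ψ ^ 2) + c) * hSC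

theorem integral_inv_one_sub_mul_sin_sq {k : ℝ} (hk : k < 1) :
    ∫ ψ in (0 : ℝ)..(π / 2), (1 - k * sin ψ ^ 2)⁻¹ = π / (2 * √(1 - k)) := by
  have hc : 0 < √(1 - k) := sqrt_pos.mpr (by linarith)
  have hderiv (ψ : ℝ) :
      HasDerivAt (fun ψ => arctanMulTan √(1 - k) ψ / √(1 - k)) (1 - k * sin ψ ^ 2)⁻¹ ψ := by
    refine ((hasDerivAt_arctanMulTan hc ψ).div_const √(1 - k)).congr_deriv ?_
    have hden : 1 - k * sin ψ ^ 2 = cos ψ ^ 2 + √(1 - k) ^ 2 * sin ψ ^ 2 := by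
      rw [sq_sqrt (by linarith)]
      linear_combination -sin_sq_add_cos_sq ψ
    rw [hden]
    field_simp
  have hcont : Continuous fun ψ => (1 - k * sin ψ ^ 2)⁻¹ :=
    (by fun_prop : Continuous fun ψ => 1 - k * sin ψ ^ 2).inv₀ fun ψ =>
      (one_sub_mul_sin_sq_pos hk ψ).ne'
  rw [integral_eq_sub_of_hasDerivAt (fun ψ _ => hderiv ψ) (hcont.intervalIntegrable _ _),
    arctanMulTan_pi_div_two, arctanMulTan_zero]
  ring

theorem integral_sq_div_one_sub_sq_mul_sq {μ s : ℝ} (hs : s ≠ 0) (hμs : |μ * s| < 1) :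
    ∫ m in (0 : ℝ)..μ, m ^ 2 / (1 - m ^ 2 * s ^ 2)
      = log ((1 + μ * s) / (1 - μ * s)) / (2 * s ^ 3) - μ / s ^ 2 := by
  have hms {m : ℝ} (hm : m ∈ uIcc 0 μ) : |m * s| < 1 := by
    rw [abs_mul] at hμs ⊢
    exact (mul_le_mul_of_nonneg_right (abs_le_abs_of_mem_uIcc_zero hm) (abs_nonneg s)).trans_lt hμs
  have hderiv (m : ℝ) (hm : m ∈ uIcc 0 μ) :
      HasDerivAt (fun m => log ((1 + m * s) / (1 - m * s)) / (2 * s ^ 3) - m / s ^ 2)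
        (m ^ 2 / (1 - m ^ 2 * s ^ 2)) m := by
    obtain ⟨hm₁, hm₂⟩ := abs_lt.mp (hms hm)
    have hp : 0 < 1 + m * s := by linarith
    have hq : 0 < 1 - m * s := by linarith
    have hnum : HasDerivAt (fun m => 1 + m * s) s m := by
      simpa using ((hasDerivAt_id m).mul_const s).const_add 1
    have hden : HasDerivAt (fun m => 1 - m * s) (-s) m := by
      simpa using ((hasDerivAt_id m).mul_const s).const_sub 1
    refine ((((hnum.div hden hq.ne').log (div_pos hp hq).ne').div_const (2 * s ^ 3)).sub
      ((hasDerivAt_id m).div_const (s ^ 2))).congr_deriv ?_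
    have : 1 - s ^ 2 * m ^ 2 ≠ 0 := by nlinarith
    rw [mul_comm m s] at hp hq
    simp only [Pi.div_apply]
    field_simp
    ring
  have hcont : ContinuousOn (fun m => m ^ 2 / (1 - m ^ 2 * s ^ 2)) (uIcc 0 μ) := by
    refine ContinuousOn.div (by fun_prop) (by fun_prop) fun m hm => ?_
    obtain ⟨hm₁, hm₂⟩ := abs_lt.mp (hms hm)
    nlinarith
  rw [integral_eq_sub_of_hasDerivAt hderiv hcont.intervalIntegrable]
  simp

theorem integral_sq_div_sqrt_one_sub_sq {μ : ℝ} (hμ : |μ| < 1) :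
    ∫ m in (0 : ℝ)..μ, m ^ 2 / √(1 - m ^ 2) = (arcsin μ - μ * √(1 - μ ^ 2)) / 2 := by
  have hm1 {m : ℝ} (hm : m ∈ uIcc 0 μ) : 0 < 1 - m ^ 2 :=
    sub_pos.mpr (sq_lt_one_of_mem_uIcc_zero hm hμ)
  have hderiv (m : ℝ) (hm : m ∈ uIcc 0 μ) :
      HasDerivAt (fun m => (arcsin m - m * √(1 - m ^ 2)) / 2) (m ^ 2 / √(1 - m ^ 2)) m := by
    obtain ⟨hm₁, hm₂⟩ := abs_lt.mp ((abs_le_abs_of_mem_uIcc_zero hm).trans_lt hμ)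
    have hsqrt : HasDerivAt (fun m => √(1 - m ^ 2)) (-(2 * m) / (2 * √(1 - m ^ 2))) m := by
      simpa using ((hasDerivAt_pow 2 m).const_sub 1).sqrt (hm1 hm).ne'
    refine (((hasDerivAt_arcsin hm₁.ne' hm₂.ne).sub ((hasDerivAt_id m).mul hsqrt)).div_const
      2).congr_deriv ?_
    have := sqrt_pos.mpr (hm1 hm)
    simp only [id]
    field_simp
    linear_combination -sq_sqrt (hm1 hm).le
  have hcont : ContinuousOn (fun m => m ^ 2 / √(1 - m ^ 2)) (uIcc 0 μ) :=
    ContinuousOn.div (by fun_prop) (by fun_prop) fun m hm => (sqrt_pos.mpr (hm1 hm)).ne'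
  rw [integral_eq_sub_of_hasDerivAt hderiv hcont.intervalIntegrable]
  simp

theorem intervalIntegral_intervalIntegral_swap_of_continuousOn {E : Type*}
    [NormedAddCommGroup E] [NormedSpace ℝ E] {F : ℝ → ℝ → E} {a b c d : ℝ}
    (hF : ContinuousOn F.uncurry (uIcc a b ×ˢ uIcc c d)) :
    ∫ x in a..b, ∫ y in c..d, F x y = ∫ y in c..d, ∫ x in a..b, F x y :=
  MeasureTheory.intervalIntegral_intervalIntegral_swap <|
    (hF.integrableOn_compact (isCompact_uIcc.prod isCompact_uIcc)).mono_set
      (prod_mono uIoc_subset_uIcc uIoc_subset_uIcc)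

/-- Angular integral identity producing the closed-form coefficient of the logarithmic
correction to the Bose polaron ground-state energy: for `μ ∈ (0,1)`,
`∫₀^{π/2} (4/sin²ψ)[(1/(2μ² sin ψ)) log((1+μ sin ψ)/(1−μ sin ψ)) − 1/μ] dψ
  = π (arcsin(μ)/μ² − √(1−μ²)/μ)`. -/
theorem angular_integral_closed_form (μ : ℝ) (hμ : μ ∈ Set.Ioo (0 : ℝ) 1) :
    ∫ ψ in (0:ℝ)..(π / 2),
      (4 / Real.sin ψ ^ 2) *
        ((1 / (2 * μ ^ 2 * Real.sin ψ)) *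
            Real.log ((1 + μ * Real.sin ψ) / (1 - μ * Real.sin ψ)) - 1 / μ) =
      π * (Real.arcsin μ / μ ^ 2 - Real.sqrt (1 - μ ^ 2) / μ) := by
  obtain ⟨hμ0, hμ1⟩ := hμ
  have hμabs : |μ| < 1 := abs_lt.mpr ⟨by linarith, hμ1⟩
  have hbracket : ∀ ψ ∈ uIoc 0 (π / 2),
      (4 / sin ψ ^ 2) * ((1 / (2 * μ ^ 2 * sin ψ)) *
        log ((1 + μ * sin ψ) / (1 - μ * sin ψ)) - 1 / μ)
      = 4 / μ ^ 2 * ∫ m in (0 : ℝ)..μ, m ^ 2 / (1 - m ^ 2 * sin ψ ^ 2) := by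
    intro ψ hψ
    rw [uIoc_of_le (by positivity)] at hψ
    have hs : 0 < sin ψ := sin_pos_of_pos_of_lt_pi hψ.1 (by linarith [hψ.2, pi_pos])
    have hμs : |μ * sin ψ| < 1 := by
      rw [abs_of_pos (by positivity)]
      nlinarith [sin_le_one ψ]
    rw [integral_sq_div_one_sub_sq_mul_sq hs.ne' hμs]
    field_simp
  have hswap := intervalIntegral_intervalIntegral_swap_of_continuousOn
    (F := fun ψ m => m ^ 2 / (1 - m ^ 2 * sin ψ ^ 2)) (a := 0) (b := π / 2) (c := 0) (d := μ)
    (ContinuousOn.div (by fun_prop) (by fun_prop) fun p hp =>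
      (one_sub_mul_sin_sq_pos (sq_lt_one_of_mem_uIcc_zero hp.2 hμabs) p.1).ne')
  have hangular : ∀ m ∈ uIcc 0 μ, ∫ ψ in (0 : ℝ)..(π / 2), m ^ 2 / (1 - m ^ 2 * sin ψ ^ 2)
      = π / 2 * (m ^ 2 / √(1 - m ^ 2)) := by
    intro m hm
    simp_rw [div_eq_mul_inv (m ^ 2)]
    rw [integral_const_mul, integral_inv_one_sub_mul_sin_sq (sq_lt_one_of_mem_uIcc_zero hm hμabs)]
    ring
  rw [integral_congr_ae (Filter.Eventually.of_forall hbracket), integral_const_mul, hswap,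
    integral_congr hangular, integral_const_mul, integral_sq_div_sqrt_one_sub_sq hμabs]
  field_simp
  ring
end

section
/- For every real μ with 0 < μ < 1, arcsin(μ)/μ − √(1−μ²) = Σ_{n=1}^∞ (4n / ((4n²−1)·4ⁿ)) · binomial(2n, n) · μ^{2n}, where binomial(2n,n) is the central binomial coefficient. -/
/-!
Write `c n = C(2n, n) / 4 ^ n = choose (n - 1/2) n`. The binomial series gives
`1 / √(1 - x) = ∑ c n x ^ n`, hence `2 y² / √(1 - y²) = ∑ 2 c n y ^ (2n + 2)`.
The left side is the derivative of `arcsin y - y √(1 - y²)`, which vanishes at `0`, so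
integrating termwise gives `arcsin y - y √(1 - y²) = ∑ 2 c n y ^ (2n + 3) / (2n + 3)`.
Dividing by `y` and using `(n + 1) c (n + 1) = (n + 1/2) c n` turns these coefficients
into the stated ones.
-/

open Real

theorem Ring.choose_half_add_natCast_sub_one (n : ℕ) :
    Ring.choose (1 / 2 + n - 1 : ℝ) n = n.centralBinom / 4 ^ n := by
  induction n with
  | zero => simp
  | succ n ih =>
    -- for `k = 1` this is `(n + 1) * choose r (n + 1) = r * choose (r - 1) n`
    have h := Ring.choose_smul_choose (1 / 2 + n : ℝ) (n := n + 1) (k := 1) le_add_self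
    simp only [Nat.choose_one_right, Ring.choose_one_right, Nat.add_sub_cancel, Nat.cast_one,
      nsmul_eq_mul, ih] at h
    have hc : ((n : ℝ) + 1) * (n + 1).centralBinom = 2 * (2 * n + 1) * n.centralBinom := by
      exact_mod_cast Nat.succ_mul_centralBinom_succ n
    rw [show (1 / 2 + ((n + 1 : ℕ) : ℝ) - 1) = 1 / 2 + n by push_cast; ring,
      eq_div_iff (by positivity)]
    apply mul_left_cancel₀ (by positivity : (n : ℝ) + 1 ≠ 0)
    push_cast at h
    rw [← mul_assoc, h, hc, pow_succ]
    field_simp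
    ring

theorem hasSum_centralBinom_div_four_pow_mul_pow {x : ℝ} (hx : |x| < 1) :
    HasSum (fun n ↦ (n.centralBinom : ℝ) / 4 ^ n * x ^ n) (1 / √(1 - x)) := by
  have h := (one_div_one_sub_rpow_hasFPowerSeriesOnBall_zero (1 / 2)).hasSum
    (y := x) (by simpa [enorm_eq_nnnorm, ← NNReal.coe_lt_coe] using hx)
  simp only [zero_add, FormalMultilinearSeries.ofScalars_apply_eq, smul_eq_mul,
    Ring.choose_half_add_natCast_sub_one] at h
  rwa [Real.sqrt_eq_rpow]

theorem hasDerivAt_tsum_div_mul_pow_succ {a : ℕ → ℝ} {C : ℝ} (ha : ∀ n, |a n| ≤ C)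
    {e : ℕ → ℕ} (he : ∀ n, n ≤ e n) {x : ℝ} (hx : |x| < 1) :
    HasDerivAt (fun y ↦ ∑' n, a n / (e n + 1) * y ^ (e n + 1)) (∑' n, a n * x ^ e n) x := by
  obtain ⟨r, hxr, hr1⟩ := exists_between hx
  have hr0 : 0 < r := (abs_nonneg x).trans_lt hxr
  have hC : 0 ≤ C := (abs_nonneg _).trans (ha 0)
  refine hasDerivAt_tsum_of_isPreconnected (u := fun n ↦ C * r ^ n) (y₀ := 0)
    (g := fun n y ↦ a n / (e n + 1) * y ^ (e n + 1)) (g' := fun n y ↦ a n * y ^ e n)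
    ((summable_geometric_of_lt_one hr0.le hr1).mul_left C) Metric.isOpen_ball
    (convex_ball 0 r).isPreconnected (fun n y _ ↦ ?_) (fun n y hy ↦ ?_)
    (Metric.mem_ball_self hr0) (by simp) (by simpa using hxr)
  · refine ((hasDerivAt_pow (e n + 1) y).const_mul (a n / (e n + 1))).congr_deriv ?_
    rw [Nat.add_sub_cancel, Nat.cast_succ]
    field_simp
  · rw [mem_ball_zero_iff, Real.norm_eq_abs] at hy
    rw [norm_mul, norm_pow, Real.norm_eq_abs, Real.norm_eq_abs]
    calc |a n| * |y| ^ e n ≤ C * r ^ e n := by gcongr; exact ha n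
      _ ≤ C * r ^ n := mul_le_mul_of_nonneg_left (pow_le_pow_of_le_one hr0.le hr1.le (he n)) hC

theorem hasDerivAt_arcsin_sub_mul_sqrt_one_sub_sq {x : ℝ} (hx : |x| < 1) :
    HasDerivAt (fun y ↦ arcsin y - y * √(1 - y ^ 2)) (2 * x ^ 2 / √(1 - x ^ 2)) x := by
  obtain ⟨hx₁, hx₂⟩ := abs_lt.mp hx
  have hpos : 0 < 1 - x ^ 2 := by nlinarith
  have hsqrt : HasDerivAt (fun y ↦ √(1 - y ^ 2)) (-(2 * x) / (2 * √(1 - x ^ 2))) x := by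
    refine HasDerivAt.sqrt ?_ hpos.ne'
    simpa using (hasDerivAt_pow 2 x).const_sub 1
  refine ((hasDerivAt_arcsin hx₁.ne' hx₂.ne).sub ((hasDerivAt_id' x).mul hsqrt)).congr_deriv ?_
  have hsq : √(1 - x ^ 2) ^ 2 = 1 - x ^ 2 := sq_sqrt hpos.le
  field_simp
  linear_combination -hsq

theorem arcsin_sub_mul_sqrt_one_sub_sq_eq_tsum {x : ℝ} (hx : |x| < 1) :
    arcsin x - x * √(1 - x ^ 2) =
      ∑' n : ℕ, 2 * (n.centralBinom : ℝ) / 4 ^ n / (2 * n + 3) * x ^ (2 * n + 3) := by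
  set a : ℕ → ℝ := fun n ↦ 2 * (n.centralBinom : ℝ) / 4 ^ n
  have ha : ∀ n, |a n| ≤ 2 := fun n ↦ by
    dsimp only [a]
    rw [abs_of_nonneg (by positivity), mul_div_assoc]
    refine mul_le_of_le_one_right zero_le_two ((div_le_one (by positivity)).mpr ?_)
    exact_mod_cast n.centralBinom_le_four_pow
  set G : ℝ → ℝ := fun y ↦ ∑' n, a n / ((2 * n + 2 : ℕ) + 1) * y ^ (2 * n + 2 + 1)
  have hG : ∀ y ∈ Metric.ball (0 : ℝ) 1, HasDerivAt G (2 * y ^ 2 / √(1 - y ^ 2)) y := by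
    intro y hy
    rw [mem_ball_zero_iff, Real.norm_eq_abs] at hy
    have hsum := (hasSum_centralBinom_div_four_pow_mul_pow (x := y ^ 2)
      (by rw [abs_pow]; nlinarith [abs_nonneg y])).mul_left (2 * y ^ 2)
    refine (hasDerivAt_tsum_div_mul_pow_succ ha (fun n ↦ by omega) hy).congr_deriv ?_
    rw [← mul_one_div, ← hsum.tsum_eq]
    refine tsum_congr fun n ↦ ?_
    ring
  have hF : ∀ y ∈ Metric.ball (0 : ℝ) 1, HasDerivAt (fun y ↦ arcsin y - y * √(1 - y ^ 2))
      (2 * y ^ 2 / √(1 - y ^ 2)) y := fun y hy ↦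
    hasDerivAt_arcsin_sub_mul_sqrt_one_sub_sq (by simpa using hy)
  have hFG := Metric.isOpen_ball.eqOn_of_deriv_eq (convex_ball (0 : ℝ) 1).isPreconnected
    (fun y hy ↦ (hF y hy).differentiableAt.differentiableWithinAt)
    (fun y hy ↦ (hG y hy).differentiableAt.differentiableWithinAt)
    (fun y hy ↦ (hF y hy).deriv.trans (hG y hy).deriv.symm) (Metric.mem_ball_self one_pos)
    (by simp [G])
  refine (hFG (by simpa using hx)).trans (tsum_congr fun n ↦ ?_)
  push_cast
  ring

theorem four_mul_succ_div_mul_choose (n : ℕ) :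
    4 * ((n : ℝ) + 1) / ((4 * ((n : ℝ) + 1) ^ 2 - 1) * 4 ^ (n + 1)) *
        (Nat.choose (2 * (n + 1)) (n + 1) : ℝ) =
      2 * (n.centralBinom : ℝ) / 4 ^ n / (2 * n + 3) := by
  have hc : ((n : ℝ) + 1) * (n + 1).centralBinom = 2 * (2 * n + 1) * n.centralBinom := by
    exact_mod_cast Nat.succ_mul_centralBinom_succ n
  rw [← Nat.centralBinom_eq_two_mul_choose, pow_succ 4,
    show 4 * ((n : ℝ) + 1) ^ 2 - 1 = (2 * n + 1) * (2 * n + 3) by ring]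
  field_simp
  linear_combination hc

/-- Power series identity: for `0 < μ < 1`,
`arcsin(μ)/μ − √(1−μ²) = Σ_{n=1}^∞ (4n/((4n²−1)·4ⁿ)) C(2n,n) μ^{2n}`,
where `C(2n,n)` is the central binomial coefficient. (The sum over `n ≥ 1` is written
as a sum over `n : ℕ` of the terms at `n+1`.) -/
theorem arcsin_sub_sqrt_series (μ : ℝ) (hμ₀ : 0 < μ) (hμ₁ : μ < 1) :
    Real.arcsin μ / μ - Real.sqrt (1 - μ ^ 2) =
      ∑' n : ℕ,
        (4 * ((n : ℝ) + 1) / ((4 * ((n : ℝ) + 1) ^ 2 - 1) * 4 ^ (n + 1))) *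
          (Nat.choose (2 * (n + 1)) (n + 1) : ℝ) * μ ^ (2 * (n + 1)) := by
  have hμ : |μ| < 1 := abs_lt.mpr ⟨by linarith, hμ₁⟩
  rw [div_sub' hμ₀.ne', div_eq_iff hμ₀.ne', arcsin_sub_mul_sqrt_one_sub_sq_eq_tsum hμ,
    ← tsum_mul_right]
  refine tsum_congr fun n ↦ ?_
  rw [four_mul_succ_div_mul_choose]
  ring
end

section
/- Let S² ⊂ ℝ³ be the unit sphere equipped with its surface measure σ (total mass 4π). Let A and b be real numbers with A > b > 0. Then ∫_{S²} ∫_{S²} (b ω·ω')² / (A + b ω·ω') dσ(ω) dσ(ω') = (8π²/b) ( A² log( (A+b)/(A−b) ) − 2Ab ). -/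
/-!
Archimedes' hat-box theorem: for a unit vector `v ∈ ℝ³`, the image of the surface measure of `S²`
under `ω ↦ ⟪v, ω⟫` is `2π` times Lebesgue measure on `[-1, 1]`. Radially extended, the sphere
integral becomes three times an integral over the unit ball; a reflection moves `v` to the first
basis vector, and spherical coordinates about that axis (polar coordinates in the two transverse
variables, then in the half-plane `(x₀, ρ)`, `ρ > 0`) give the density `r² sin θ`, where
`t = cos θ` turns `sin θ dθ` into `dt`. So the inner integral is `2π ∫₋₁¹ (bt)²/(A + bt) dt`
whatever `ω` is, an elementary integral, and the outer one multiplies it by the mass `4π` of `S²`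
(the hat-box formula for the constant `1`).
-/

open Real MeasureTheory
open scoped RealInnerProductSpace

noncomputable section

/-- The surface measure on the unit sphere `S² ⊂ ℝ³` (total mass `4π`). -/
def sphereMeasure : Measure (Metric.sphere (0 : EuclideanSpace ℝ (Fin 3)) 1) :=
  (volume : Measure (EuclideanSpace ℝ (Fin 3))).toSphere

open Set Metric
open scoped ENNReal

local notation "ℝ³" => EuclideanSpace ℝ (Fin 3)

theorem lintegral_toSphere_eq_mul_setLIntegral_ball {E : Type*} [NormedAddCommGroup E]
    [NormedSpace ℝ E] [FiniteDimensional ℝ E] [MeasurableSpace E] [BorelSpace E]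
    (μ : Measure E) [μ.IsAddHaarMeasure] {f : E → ℝ≥0∞} (hf : Measurable f) :
    ∫⁻ ω, f ω ∂μ.toSphere = Module.finrank ℝ E * ∫⁻ x in ball 0 1, f (‖x‖⁻¹ • x) ∂μ := by
  nontriviality E
  set n := Module.finrank ℝ E
  have hn : 0 < n := Module.finrank_pos
  let r₁ : Ioi (0 : ℝ) := ⟨1, mem_Ioi.2 one_pos⟩
  have hball : ∫⁻ x in ball 0 1, f (‖x‖⁻¹ • x) ∂μ
      = ∫⁻ p, f p.1 * (Iio r₁).indicator 1 p.2 ∂μ.toSphere.prod (.volumeIoiPow (n - 1)) :=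
    calc ∫⁻ x in ball 0 1, f (‖x‖⁻¹ • x) ∂μ
        = ∫⁻ x : ({0}ᶜ : Set E), (ball 0 1).indicator (fun x ↦ f (‖x‖⁻¹ • x)) x
            ∂μ.comap (↑) := by
          rw [lintegral_subtype_comap (measurableSet_singleton _).compl,
            restrict_compl_singleton, lintegral_indicator measurableSet_ball]
      _ = _ := by
          rw [← μ.measurePreserving_homeomorphUnitSphereProd.lintegral_comp_emb
            (Homeomorph.measurableEmbedding _)]
          congr 1 with x
          by_cases hx : ‖(x : E)‖ < 1 <;>
            simp [indicator, hx, ← Subtype.coe_lt_coe, r₁]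
  rw [hball, lintegral_prod_mul (f := fun ω : sphere (0 : E) 1 ↦ f ω) (g := (Iio r₁).indicator 1)
    (hf.comp measurable_subtype_coe).aemeasurable
    (measurable_const.indicator measurableSet_Iio).aemeasurable,
    lintegral_indicator_one measurableSet_Iio, Measure.volumeIoiPow_apply_Iio,
    Nat.sub_add_cancel hn, Nat.cast_pred hn, sub_add_cancel, one_pow,
    ENNReal.ofReal_div_of_pos (by positivity), ENNReal.ofReal_one, ENNReal.ofReal_natCast,
    mul_left_comm, ENNReal.mul_div_cancel (by positivity) (by simp), mul_one]

theorem lintegral_comp_inner_norm_eq_of_norm_eq {E : Type*} [NormedAddCommGroup E]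
    [InnerProductSpace ℝ E] [FiniteDimensional ℝ E] [MeasurableSpace E] [BorelSpace E]
    {u v : E} (h : ‖u‖ = ‖v‖) (F : ℝ × ℝ → ℝ≥0∞) :
    ∫⁻ x, F (⟪u, x⟫, ‖x‖) = ∫⁻ x, F (⟪v, x⟫, ‖x‖) := by
  set R := (ℝ ∙ (u - v))ᗮ.reflection
  have hRu : R u = v := Submodule.reflection_sub h
  calc ∫⁻ x, F (⟪u, x⟫, ‖x‖) = ∫⁻ x, F (⟪v, R x⟫, ‖R x‖) := by
        simp_rw [← hRu, LinearIsometryEquiv.inner_map_map, LinearIsometryEquiv.norm_map]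
    _ = ∫⁻ x, F (⟪v, x⟫, ‖x‖) :=
        R.measurePreserving.lintegral_comp_emb R.toHomeomorph.measurableEmbedding
          fun x ↦ F (⟪v, x⟫, ‖x‖)

theorem sqrt_sq_add_sq_polarCoord_symm {p : ℝ × ℝ} (hp : 0 ≤ p.1) :
    √((polarCoord.symm p).1 ^ 2 + (polarCoord.symm p).2 ^ 2) = p.1 := by
  simp only [polarCoord_symm_apply]
  rw [mul_pow, mul_pow, ← mul_add, cos_sq_add_sin_sq, mul_one, sqrt_sq hp]

theorem lintegral_fun_sqrt_sq_add_sq {f : ℝ → ℝ≥0∞} (hf : Measurable f) :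
    ∫⁻ p : ℝ × ℝ, f √(p.1 ^ 2 + p.2 ^ 2)
      = ENNReal.ofReal (2 * π) * ∫⁻ r in Ioi 0, ENNReal.ofReal r * f r := by
  rw [← lintegral_comp_polarCoord_symm, polarCoord_target,
    setLIntegral_congr_fun (measurableSet_Ioi.prod measurableSet_Ioo)
      (g := fun p ↦ ENNReal.ofReal p.1 * f p.1)
      fun p hp ↦ by rw [smul_eq_mul, sqrt_sq_add_sq_polarCoord_symm hp.1.out.le],
    Measure.volume_eq_prod, setLIntegral_prod _ (by fun_prop)]
  simp only [lintegral_const, Measure.restrict_apply MeasurableSet.univ, univ_inter,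
    Real.volume_Ioo]
  rw [← lintegral_const_mul _ (by fun_prop)]
  congr 1 with r
  ring_nf

theorem polarCoord_symm_mem_upperHalfPlane_iff {p : ℝ × ℝ} (hp : p ∈ polarCoord.target) :
    polarCoord.symm p ∈ univ ×ˢ Ioi 0 ↔ p ∈ Ioi 0 ×ˢ Ioo 0 π := by
  obtain ⟨hr, hθ₁, hθ₂⟩ := hp
  simp only [polarCoord_symm_apply, mem_prod, mem_univ, mem_Ioi, mul_pos_iff_of_pos_left hr.out,
    true_and, hr, mem_Ioo, hθ₂, and_true]
  refine ⟨fun h ↦ ?_, fun h ↦ sin_pos_of_pos_of_lt_pi h hθ₂⟩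
  by_contra! h'
  exact h.not_ge (sin_nonpos_of_nonpos_of_neg_pi_le h' hθ₁.le)

theorem setLIntegral_upperHalfPlane_comp_polarCoord_symm (f : ℝ × ℝ → ℝ≥0∞) :
    ∫⁻ q in Ioi 0 ×ˢ Ioo 0 π, ENNReal.ofReal q.1 * f (polarCoord.symm q)
      = ∫⁻ p in univ ×ˢ Ioi 0, f p := by
  have hsub : Ioi 0 ×ˢ Ioo 0 π ⊆ polarCoord.target :=
    prod_mono_right (Ioo_subset_Ioo_left (by linarith [pi_pos]))
  rw [← lintegral_indicator (MeasurableSet.univ.prod measurableSet_Ioi),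
    ← lintegral_comp_polarCoord_symm, ← inter_eq_left.2 hsub,
    ← setLIntegral_indicator (t := polarCoord.target) (measurableSet_Ioi.prod measurableSet_Ioo)]
  refine setLIntegral_congr_fun polarCoord.open_target.measurableSet fun q hq ↦ ?_
  by_cases h : q ∈ Ioi 0 ×ˢ Ioo 0 π
  · rw [indicator_of_mem h, indicator_of_mem ((polarCoord_symm_mem_upperHalfPlane_iff hq).2 h),
      smul_eq_mul]
  · rw [indicator_of_notMem h,
      indicator_of_notMem (mt (polarCoord_symm_mem_upperHalfPlane_iff hq).1 h), smul_zero]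

theorem setLIntegral_Ioo_zero_one_ofReal_sq :
    ∫⁻ r in Ioo 0 1, ENNReal.ofReal (r ^ 2) = 3⁻¹ := by
  rw [← ofReal_integral_eq_lintegral_ofReal
      ((continuous_pow 2).integrableOn_Icc.mono_set Ioo_subset_Icc_self)
      (ae_of_all _ fun r ↦ sq_nonneg r),
    ← integral_Ioc_eq_integral_Ioo, ← intervalIntegral.integral_of_le zero_le_one, integral_pow]
  norm_num
  rw [one_div, ENNReal.ofReal_inv_of_pos three_pos, ENNReal.ofReal_ofNat]

theorem setLIntegral_Ioo_zero_pi_ofReal_sin_mul_comp_cos (f : ℝ → ℝ≥0∞) :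
    ∫⁻ θ in Ioo 0 π, ENNReal.ofReal (sin θ) * f (cos θ) = ∫⁻ t in Icc (-1) 1, f t := by
  rw [← bijOn_cos.image_eq, lintegral_image_eq_lintegral_abs_deriv_mul measurableSet_Icc
    (fun θ _ ↦ (hasDerivAt_cos θ).hasDerivWithinAt) injOn_cos,
    Measure.restrict_congr_set Ioo_ae_eq_Icc.symm]
  refine setLIntegral_congr_fun measurableSet_Ioo fun θ hθ ↦ ?_
  rw [abs_neg, abs_of_pos (sin_pos_of_mem_Ioo hθ)]

theorem lintegral_euclideanSpace_fin_three (f : ℝ × ℝ × ℝ → ℝ≥0∞) :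
    ∫⁻ x : ℝ³, f (x 0, x 1, x 2) = ∫⁻ p, f p := by
  have h₁ := EuclideanSpace.volume_preserving_symm_measurableEquiv_toLp (Fin 3)
  have h₂ := volume_preserving_piFinSuccAbove (fun _ : Fin 3 ↦ ℝ) 0
  have h₃ : MeasurePreserving (Prod.map id MeasurableEquiv.finTwoArrow)
      (volume : Measure (ℝ × (Fin 2 → ℝ))) (volume : Measure (ℝ × ℝ × ℝ)) :=
    (MeasurePreserving.id volume).prod (volume_preserving_finTwoArrow ℝ)
  let e : ℝ³ ≃ᵐ ℝ × ℝ × ℝ :=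
    (MeasurableEquiv.toLp 2 (Fin 3 → ℝ)).symm.trans <|
      (MeasurableEquiv.piFinSuccAbove (fun _ ↦ ℝ) 0).trans <|
        (MeasurableEquiv.refl ℝ).prodCongr MeasurableEquiv.finTwoArrow
  exact (h₃.comp (h₂.comp h₁)).lintegral_comp_emb e.measurableEmbedding f

theorem lintegral_fun_coord_zero_norm {F : ℝ × ℝ → ℝ≥0∞} (hF : Measurable F) :
    ∫⁻ x : ℝ³, F (x 0, ‖x‖)
      = ENNReal.ofReal (2 * π) * ∫⁻ q in Ioi 0 ×ˢ Ioo 0 π,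
          ENNReal.ofReal (q.1 ^ 2 * sin q.2) * F (q.1 * cos q.2, q.1) := by
  have hnorm (x : ℝ³) : ‖x‖ = √(x 0 ^ 2 + √(x 1 ^ 2 + x 2 ^ 2) ^ 2) := by
    rw [EuclideanSpace.norm_eq, Fin.sum_univ_three, sq_sqrt (by positivity), ← add_assoc]
    simp only [Real.norm_eq_abs, sq_abs]
  simp_rw [hnorm]
  rw [lintegral_euclideanSpace_fin_three
      (fun p ↦ F (p.1, √(p.1 ^ 2 + √(p.2.1 ^ 2 + p.2.2 ^ 2) ^ 2))),
    Measure.volume_eq_prod, lintegral_prod _ (by fun_prop)]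
  simp_rw [fun t ↦ lintegral_fun_sqrt_sq_add_sq (f := fun r ↦ F (t, √(t ^ 2 + r ^ 2)))
    (by fun_prop)]
  rw [lintegral_const_mul _ (by fun_prop), ← setLIntegral_univ,
    ← setLIntegral_prod (fun p : ℝ × ℝ ↦ ENNReal.ofReal p.2 * F (p.1, √(p.1 ^ 2 + p.2 ^ 2)))
      (by fun_prop), ← Measure.volume_eq_prod, ← setLIntegral_upperHalfPlane_comp_polarCoord_symm]
  refine congrArg _ (setLIntegral_congr_fun (measurableSet_Ioi.prod measurableSet_Ioo)
    fun q hq ↦ ?_)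
  rw [sqrt_sq_add_sq_polarCoord_symm hq.1.out.le, ← mul_assoc, ← ENNReal.ofReal_mul hq.1.out.le]
  simp only [polarCoord_symm_apply]
  ring_nf

theorem lintegral_sphereMeasure_comp_inner {v : ℝ³} (hv : ‖v‖ = 1)
    {f : ℝ → ℝ≥0∞} (hf : Measurable f) :
    ∫⁻ ω, f ⟪v, ω⟫ ∂sphereMeasure = ENNReal.ofReal (2 * π) * ∫⁻ t in Icc (-1) 1, f t := by
  let F : ℝ × ℝ → ℝ≥0∞ := {p | p.2 < 1}.indicator fun p ↦ f (p.2⁻¹ * p.1)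
  have hF : Measurable F :=
    (hf.comp (by fun_prop)).indicator (measurableSet_lt (by fun_prop) (by fun_prop))
  have hball : ∫⁻ x in ball 0 1, f ⟪v, ‖x‖⁻¹ • x⟫ = ∫⁻ x, F (⟪v, x⟫, ‖x‖) := by
    rw [← lintegral_indicator measurableSet_ball]
    congr 1 with x
    simp [F, indicator, real_inner_smul_right]
  have hsph : ∀ q ∈ Ioi 0 ×ˢ Ioo 0 π,
      ENNReal.ofReal (q.1 ^ 2 * sin q.2) * F (q.1 * cos q.2, q.1)
        = (Iio 1).indicator (fun r ↦ ENNReal.ofReal (r ^ 2)) q.1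
          * (ENNReal.ofReal (sin q.2) * f (cos q.2)) := fun q hq ↦ by
    by_cases h : q.1 < 1 <;>
      simp [F, indicator, h, ENNReal.ofReal_mul (sq_nonneg q.1),
        inv_mul_cancel_left₀ hq.1.out.ne', mul_assoc]
  rw [sphereMeasure,
    lintegral_toSphere_eq_mul_setLIntegral_ball _ (f := fun x ↦ f ⟪v, x⟫) (by fun_prop), hball,
    lintegral_comp_inner_norm_eq_of_norm_eq (v := EuclideanSpace.single 0 1) (by simp [hv])]
  simp only [EuclideanSpace.inner_single_left, map_one, one_mul]
  rw [lintegral_fun_coord_zero_norm hF,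
    setLIntegral_congr_fun (measurableSet_Ioi.prod measurableSet_Ioo) hsph,
    Measure.volume_eq_prod, ← Measure.prod_restrict,
    lintegral_prod_mul (f := (Iio 1).indicator fun r ↦ ENNReal.ofReal (r ^ 2))
      (g := fun θ ↦ ENNReal.ofReal (sin θ) * f (cos θ))
      ((by fun_prop : Measurable _).indicator measurableSet_Iio).aemeasurable (by fun_prop),
    setLIntegral_indicator measurableSet_Iio,
    Iio_inter_Ioi, setLIntegral_Ioo_zero_one_ofReal_sq,
    setLIntegral_Ioo_zero_pi_ofReal_sin_mul_comp_cos, finrank_euclideanSpace_fin]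
  push_cast
  rw [mul_left_comm, ← mul_assoc (3 : ℝ≥0∞), ENNReal.mul_inv_cancel (by norm_num) (by norm_num),
    one_mul]

theorem map_inner_sphereMeasure {v : ℝ³} (hv : ‖v‖ = 1) :
    sphereMeasure.map (fun ω : sphere (0 : ℝ³) 1 ↦ ⟪v, (ω : ℝ³)⟫)
      = ENNReal.ofReal (2 * π) • volume.restrict (Icc (-1) 1) :=
  Measure.ext_of_lintegral _ fun f hf ↦ by
    rw [lintegral_map hf (by fun_prop), lintegral_smul_measure,
      lintegral_sphereMeasure_comp_inner hv hf, smul_eq_mul]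

theorem integral_sphereMeasure_comp_inner {v : ℝ³} (hv : ‖v‖ = 1)
    {g : ℝ → ℝ} (hg : Measurable g) :
    ∫ ω, g ⟪v, ω⟫ ∂sphereMeasure = 2 * π * ∫ t in (-1)..1, g t := by
  rw [← integral_map (by fun_prop) hg.aestronglyMeasurable, map_inner_sphereMeasure hv,
    integral_smul_measure, intervalIntegral.integral_of_le (by norm_num),
    integral_Icc_eq_integral_Ioc, ENNReal.toReal_ofReal (by positivity), smul_eq_mul]

theorem sphereMeasure_real_univ : sphereMeasure.real univ = 4 * π := by
  have h := integral_sphereMeasure_comp_inner (v := EuclideanSpace.single 0 1) (by simp)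
    (measurable_const (a := (1 : ℝ)))
  simp at h
  linarith

theorem integral_sq_div_add_mul {A b : ℝ} (hb : b ≠ 0) (hA : |b| < A) :
    ∫ t in (-1)..1, (b * t) ^ 2 / (A + b * t) = A ^ 2 / b * log ((A + b) / (A - b)) - 2 * A := by
  have hpos : ∀ t ∈ uIcc (-1 : ℝ) 1, 0 < A + b * t := fun t ht ↦ by
    rw [uIcc_of_le (by norm_num), mem_Icc, ← abs_le] at ht
    have := abs_mul b t ▸ mul_le_of_le_one_right (abs_nonneg b) ht
    linarith [neg_abs_le (b * t)]
  have hderiv : ∀ t ∈ uIcc (-1 : ℝ) 1, HasDerivAt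
      (fun t ↦ b * t ^ 2 / 2 - A * t + A ^ 2 / b * log (A + b * t))
      ((b * t) ^ 2 / (A + b * t)) t := by
    intro t ht
    have hlin : HasDerivAt (fun t ↦ A + b * t) b t := by
      simpa using ((hasDerivAt_id t).const_mul b).const_add A
    refine ((((hasDerivAt_pow 2 t).const_mul b).div_const 2).sub
      ((hasDerivAt_id t).const_mul A)).add
        ((hlin.log (hpos t ht).ne').const_mul (A ^ 2 / b)) |>.congr_deriv ?_
    field_simp [(hpos t ht).ne']
    ring
  rw [intervalIntegral.integral_eq_sub_of_hasDerivAt hderiv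
    (ContinuousOn.intervalIntegrable (ContinuousOn.div (by fun_prop) (by fun_prop)
      fun t ht ↦ (hpos t ht).ne'))]
  have h₁ : 0 < A + b := by simpa using hpos 1 (by simp)
  have h₂ : 0 < A - b := by simpa [← sub_eq_add_neg] using hpos (-1) (by simp)
  simp only [mul_one, mul_neg_one, ← sub_eq_add_neg]
  rw [log_div h₁.ne' h₂.ne']
  ring

/-- Closed-form evaluation of the angular part of the three-body scattering integral:
for real numbers `A > b > 0`,
`∫_{S²} ∫_{S²} (b ω·ω')²/(A + b ω·ω') dσ(ω) dσ(ω')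
  = (8π²/b)(A² log((A+b)/(A−b)) − 2Ab)`. -/
theorem sphere_double_integral_energy_denominator (A b : ℝ) (hb : 0 < b) (hA : b < A) :
    ∫ ω, ∫ ω',
        (b * ⟪(ω : EuclideanSpace ℝ (Fin 3)), (ω' : EuclideanSpace ℝ (Fin 3))⟫) ^ 2 /
          (A + b * ⟪(ω : EuclideanSpace ℝ (Fin 3)), (ω' : EuclideanSpace ℝ (Fin 3))⟫)
        ∂sphereMeasure ∂sphereMeasure =
      (8 * π ^ 2 / b) * (A ^ 2 * Real.log ((A + b) / (A - b)) - 2 * A * b) := by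
  have hinner (ω : sphere (0 : ℝ³) 1) :
      ∫ ω', (b * ⟪(ω : ℝ³), ω'⟫) ^ 2 / (A + b * ⟪(ω : ℝ³), ω'⟫) ∂sphereMeasure
        = 2 * π * (A ^ 2 / b * log ((A + b) / (A - b)) - 2 * A) := by
    rw [integral_sphereMeasure_comp_inner (norm_eq_of_mem_sphere ω)
      (g := fun t ↦ (b * t) ^ 2 / (A + b * t)) (by fun_prop),
      integral_sq_div_add_mul hb.ne' (by rwa [abs_of_pos hb])]
  simp_rw [hinner]
  rw [integral_const, smul_eq_mul, sphereMeasure_real_univ]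
  field_simp
  ring
end
end

section
/- For the momentum lattice (2πℤ)³ ⊂ ℝ³, lim_{Λ→∞} Λ · Σ_{k ∈ (2πℤ)³, |k| > Λ} 1/|k|⁴ = 1/(2π²). -/
/-!
Tile `ℝᵈ` by the unit cubes `k + [0,1)ᵈ`, `k ∈ ℤᵈ`. Every point `x` of the cube of `k` lies within
`√d` of `k`, so on the tail `R < |k|` the power `|k|⁻ᵖ` agrees with `|x|⁻ᵖ` up to a factor
`(1 + √d / R)ᵖ`, provided the cutoff is moved by `√d`. Summing over the cubes squeezes the lattice
tail sum between integrals `∫_{|x| > R ± √d} |x|⁻ᵖ dx = d |B₁| (R ± √d)^{d-p} / (p - d)`, computed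
in polar coordinates, so `R^{p-d} Σ_{|k| > R} |k|⁻ᵖ → d |B₁| / (p - d)`. For `d = 3`, `p = 4` this
limit is `4π`, and rescaling the lattice by `2π` turns it into `(2π)⁻³ · 4π = 1 / (2π²)`.
-/

open Real Filter
open scoped Classical

noncomputable section

/-- The Euclidean norm of the point `2πk` of the momentum lattice `(2πℤ)³ ⊂ ℝ³`. -/
def latticeNorm (k : Fin 3 → ℤ) : ℝ :=
  2 * π * Real.sqrt (∑ i, ((k i : ℝ)) ^ 2)

open MeasureTheory Metric Set Function
open scoped ENNReal Topology

def tailInvPow (p : ℕ) (R r : ℝ) : ℝ := if R < r then (r ^ p)⁻¹ else 0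

lemma tailInvPow_nonneg (p : ℕ) (R : ℝ) {r : ℝ} (hr : 0 ≤ r) : 0 ≤ tailInvPow p R r := by
  unfold tailInvPow; split_ifs <;> positivity

lemma tailInvPow_mul_mul {s : ℝ} (hs : 0 < s) (p : ℕ) (R r : ℝ) :
    tailInvPow p (s * R) (s * r) = (s ^ p)⁻¹ * tailInvPow p R r := by
  simp only [tailInvPow, mul_lt_mul_iff_right₀ hs, mul_pow, mul_inv, mul_ite, mul_zero]

lemma tailInvPow_le_of_abs_sub_le {p : ℕ} {R c r s : ℝ} (hR : 0 < R) (hcR : c ≤ R)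
    (h : |r - s| ≤ c) : tailInvPow p R r ≤ (1 + c / R) ^ p * tailInvPow p (R - c) s := by
  rw [abs_le] at h
  have hC : 0 < 1 + c / R := by have := div_nonneg (by linarith : 0 ≤ c) hR.le; linarith
  unfold tailInvPow
  split_ifs with hr hs hs
  · have hs_le : s / (1 + c / R) ≤ r := by
      rw [div_le_iff₀ hC, mul_add, mul_one, mul_div_assoc']
      have : r * c / R ≥ c := by rw [ge_iff_le, le_div_iff₀ hR]; nlinarith
      linarith
    calc (r ^ p)⁻¹ ≤ ((s / (1 + c / R)) ^ p)⁻¹ := by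
          have : 0 < s := by linarith
          gcongr
      _ = (1 + c / R) ^ p * (s ^ p)⁻¹ := by rw [div_pow, inv_div, div_eq_mul_inv]
  · exact absurd (by linarith) hs
  · have : 0 < s := by linarith
    positivity
  · simp

lemma pow_mul_tailInvPow_eqOn {d p : ℕ} (hd : 0 < d) (hdp : d < p) (a : ℝ) :
    EqOn (fun y : ℝ => y ^ (d - 1) * tailInvPow p a y)
      ((Ioi a).indicator fun y => y ^ (-((p - d + 1 : ℕ) : ℝ))) (Ioi 0) := by
  intro y (hy : 0 < y)
  dsimp only
  by_cases hay : a < y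
  · have hp : p = (d - 1) + (p - d + 1) := by omega
    rw [indicator_of_mem (show y ∈ Ioi a from hay), tailInvPow, if_pos hay, rpow_neg hy.le,
      rpow_natCast, hp, pow_add, mul_inv, ← mul_assoc, mul_inv_cancel₀ (by positivity), one_mul,
      ← hp]
  · rw [indicator_of_notMem (show y ∉ Ioi a from hay), tailInvPow, if_neg hay, mul_zero]

lemma integrableOn_pow_mul_tailInvPow {d p : ℕ} (hd : 0 < d) (hdp : d < p) {a : ℝ} (ha : 0 < a) :
    IntegrableOn (fun y : ℝ => y ^ (d - 1) * tailInvPow p a y) (Ioi 0) := by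
  rw [integrableOn_congr_fun (pow_mul_tailInvPow_eqOn hd hdp a) measurableSet_Ioi,
    IntegrableOn, integrable_indicator_iff measurableSet_Ioi]
  refine (integrableOn_Ioi_rpow_of_lt ?_ ha).restrict
  push_cast
  linarith [(Nat.one_le_cast (α := ℝ)).mpr (Nat.sub_pos_of_lt hdp)]

lemma integral_pow_mul_tailInvPow {d p : ℕ} (hd : 0 < d) (hdp : d < p) {a : ℝ} (ha : 0 < a) :
    ∫ y in Ioi (0 : ℝ), y ^ (d - 1) * tailInvPow p a y = (a ^ (p - d))⁻¹ / (p - d : ℕ) := by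
  have hq : (1 : ℝ) ≤ (p - d : ℕ) := Nat.one_le_cast.mpr (Nat.sub_pos_of_lt hdp)
  rw [setIntegral_congr_fun measurableSet_Ioi (pow_mul_tailInvPow_eqOn hd hdp a),
    setIntegral_indicator measurableSet_Ioi, Ioi_inter_Ioi, max_eq_right ha.le,
    integral_Ioi_rpow_of_lt (by push_cast; linarith) ha]
  rw [show -((p - d + 1 : ℕ) : ℝ) + 1 = -((p - d : ℕ) : ℝ) by push_cast; ring, rpow_neg ha.le,
    rpow_natCast, neg_div_neg_eq]

section Radial

variable {E : Type*} [NormedAddCommGroup E] [NormedSpace ℝ E] [FiniteDimensional ℝ E]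
  [MeasurableSpace E] [BorelSpace E] [Nontrivial E] (μ : Measure E) [μ.IsAddHaarMeasure]

open Module

lemma integrable_tailInvPow_norm {p : ℕ} (hp : finrank ℝ E < p) {a : ℝ} (ha : 0 < a) :
    Integrable (fun x : E => tailInvPow p a ‖x‖) μ :=
  (integrable_fun_norm_addHaar μ).mpr (integrableOn_pow_mul_tailInvPow finrank_pos hp ha)

lemma integral_tailInvPow_norm {p : ℕ} (hp : finrank ℝ E < p) {a : ℝ} (ha : 0 < a) :
    ∫ x, tailInvPow p a ‖x‖ ∂μ =
      finrank ℝ E * μ.real (ball 0 1) / (p - finrank ℝ E : ℕ) * (a ^ (p - finrank ℝ E))⁻¹ := by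
  simp only [integral_fun_norm_addHaar μ, nsmul_eq_mul, smul_eq_mul,
    integral_pow_mul_tailInvPow finrank_pos hp ha]
  ring

lemma lintegral_ofReal_tailInvPow_norm {p : ℕ} (hp : finrank ℝ E < p) {a : ℝ} (ha : 0 < a) :
    ∫⁻ x, ENNReal.ofReal (tailInvPow p a ‖x‖) ∂μ = ENNReal.ofReal
      (finrank ℝ E * μ.real (ball 0 1) / (p - finrank ℝ E : ℕ) * (a ^ (p - finrank ℝ E))⁻¹) := by
  rw [← ofReal_integral_eq_lintegral_ofReal (integrable_tailInvPow_norm μ hp ha)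
    (ae_of_all _ fun x => tailInvPow_nonneg _ _ (norm_nonneg x)), integral_tailInvPow_norm μ hp ha]

end Radial

section UnitCube

variable {ι : Type*}

def intVec (k : ι → ℤ) : EuclideanSpace ℝ ι := WithLp.toLp 2 fun i => (k i : ℝ)

def unitCube (k : ι → ℤ) : Set (EuclideanSpace ℝ ι) :=
  (MeasurableEquiv.toLp 2 (ι → ℝ)).symm ⁻¹' univ.pi fun i => Ico (k i : ℝ) (k i + 1)

lemma mem_unitCube {k : ι → ℤ} {x : EuclideanSpace ℝ ι} :
    x ∈ unitCube k ↔ ∀ i, (k i : ℝ) ≤ x i ∧ x i < k i + 1 := by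
  simp only [unitCube, mem_preimage, MeasurableEquiv.coe_toLp_symm, mem_univ_pi, mem_Ico]

lemma measurableSet_unitCube [Countable ι] (k : ι → ℤ) : MeasurableSet (unitCube k) :=
  (MeasurableEquiv.toLp 2 (ι → ℝ)).symm.measurable (.univ_pi fun _ => measurableSet_Ico)

lemma volume_unitCube [Fintype ι] (k : ι → ℤ) : volume (unitCube k) = 1 := by
  rw [unitCube, (EuclideanSpace.volume_preserving_symm_measurableEquiv_toLp ι).measure_preimage
    (MeasurableSet.univ_pi fun _ => measurableSet_Ico).nullMeasurableSet, volume_pi_pi]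
  simp [Real.volume_Ico]

lemma pairwise_disjoint_unitCube : Pairwise (Disjoint on (unitCube (ι := ι))) := by
  refine fun k l hkl => disjoint_left.mpr fun x hxk hxl => hkl (funext fun i => ?_)
  obtain ⟨hk, hk'⟩ := mem_unitCube.mp hxk i
  obtain ⟨hl, hl'⟩ := mem_unitCube.mp hxl i
  rw [← Int.floor_eq_iff.mpr ⟨hk, hk'⟩, Int.floor_eq_iff.mpr ⟨hl, hl'⟩]

lemma iUnion_unitCube : ⋃ k, unitCube k = (univ : Set (EuclideanSpace ℝ ι)) :=
  eq_univ_of_forall fun x => mem_iUnion.mpr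
    ⟨fun i => ⌊x i⌋, mem_unitCube.mpr fun _ => ⟨Int.floor_le _, Int.lt_floor_add_one _⟩⟩

lemma norm_sub_intVec_le [Fintype ι] {k : ι → ℤ} {x : EuclideanSpace ℝ ι}
    (hx : x ∈ unitCube k) :
    ‖x - intVec k‖ ≤ √(Fintype.card ι) := by
  rw [EuclideanSpace.norm_eq]
  refine sqrt_le_sqrt ?_
  calc ∑ i, ‖(x - intVec k) i‖ ^ 2 ≤ ∑ _ : ι, (1 : ℝ) := by
        refine Finset.sum_le_sum fun i _ => ?_
        obtain ⟨h, h'⟩ := mem_unitCube.mp hx i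
        rw [Real.norm_eq_abs, sq_abs]
        change (x i - k i) ^ 2 ≤ 1
        nlinarith
    _ = Fintype.card ι := by simp

lemma tsum_le_lintegral_of_forall_mem_unitCube [Fintype ι] {F : (ι → ℤ) → ℝ≥0∞}
    {G : EuclideanSpace ℝ ι → ℝ≥0∞} (h : ∀ k, ∀ x ∈ unitCube k, F k ≤ G x) :
    ∑' k, F k ≤ ∫⁻ x, G x := by
  calc ∑' k, F k = ∑' k, ∫⁻ _ in unitCube k, F k := by
        simp only [setLIntegral_const, volume_unitCube, mul_one]
    _ ≤ ∑' k, ∫⁻ x in unitCube k, G x :=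
        ENNReal.tsum_le_tsum fun k => setLIntegral_mono' (measurableSet_unitCube k) (h k)
    _ = ∫⁻ x, G x := by
        rw [← lintegral_iUnion measurableSet_unitCube pairwise_disjoint_unitCube,
          iUnion_unitCube, Measure.restrict_univ]

lemma lintegral_le_tsum_of_forall_mem_unitCube [Fintype ι] {F : (ι → ℤ) → ℝ≥0∞}
    {G : EuclideanSpace ℝ ι → ℝ≥0∞} (h : ∀ k, ∀ x ∈ unitCube k, G x ≤ F k) :
    ∫⁻ x, G x ≤ ∑' k, F k := by
  calc ∫⁻ x, G x = ∑' k, ∫⁻ x in unitCube k, G x := by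
        rw [← lintegral_iUnion measurableSet_unitCube pairwise_disjoint_unitCube,
          iUnion_unitCube, Measure.restrict_univ]
    _ ≤ ∑' k, ∫⁻ _ in unitCube k, F k :=
        ENNReal.tsum_le_tsum fun k => setLIntegral_mono' (measurableSet_unitCube k) (h k)
    _ = ∑' k, F k := by
        simp only [setLIntegral_const, volume_unitCube, mul_one]

end UnitCube

section LatticeTail

variable {ι : Type*} [Fintype ι]

variable (ι) in
def latticeTailSum (p : ℕ) (R : ℝ) : ℝ := ∑' k : ι → ℤ, tailInvPow p R ‖intVec k‖

variable (ι) in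
def latticeTailConst (p : ℕ) : ℝ :=
  Fintype.card ι * volume.real (ball (0 : EuclideanSpace ℝ ι) 1) / (p - Fintype.card ι : ℕ)

lemma latticeTailConst_nonneg (p : ℕ) : 0 ≤ latticeTailConst ι p := by
  unfold latticeTailConst; positivity

lemma tsum_ofReal_tailInvPow_le_mul_lintegral {p : ℕ} {R : ℝ} (hR : 0 < R)
    (hcR : √(Fintype.card ι) ≤ R) :
    ∑' k : ι → ℤ, ENNReal.ofReal (tailInvPow p R ‖intVec k‖) ≤
      ENNReal.ofReal ((1 + √(Fintype.card ι) / R) ^ p) *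
        ∫⁻ x : EuclideanSpace ℝ ι, ENNReal.ofReal (tailInvPow p (R - √(Fintype.card ι)) ‖x‖) := by
  rw [← lintegral_const_mul' _ _ ENNReal.ofReal_ne_top]
  refine tsum_le_lintegral_of_forall_mem_unitCube fun k x hx => ?_
  rw [← ENNReal.ofReal_mul (by positivity)]
  refine ENNReal.ofReal_le_ofReal (tailInvPow_le_of_abs_sub_le hR hcR ?_)
  rw [abs_sub_comm]
  exact (abs_norm_sub_norm_le _ _).trans (norm_sub_intVec_le hx)

lemma lintegral_ofReal_tailInvPow_le_mul_tsum {p : ℕ} {R : ℝ} (hR : 0 < R) :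
    ∫⁻ x : EuclideanSpace ℝ ι, ENNReal.ofReal (tailInvPow p (R + √(Fintype.card ι)) ‖x‖) ≤
      ENNReal.ofReal ((1 + √(Fintype.card ι) / R) ^ p) *
        ∑' k : ι → ℤ, ENNReal.ofReal (tailInvPow p R ‖intVec k‖) := by
  rw [← ENNReal.tsum_mul_left]
  refine lintegral_le_tsum_of_forall_mem_unitCube fun k x hx => ?_
  set c := √(Fintype.card ι)
  have hc : 0 ≤ c := sqrt_nonneg _
  -- the comparison of the upper bound, with `k` and `x` exchanged and the cutoff moved to `R + c`
  have hle := tailInvPow_le_of_abs_sub_le (p := p) (add_pos_of_pos_of_nonneg hR hc)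
    (le_add_of_nonneg_left hR.le)
    ((abs_norm_sub_norm_le x (intVec k)).trans (norm_sub_intVec_le hx))
  rw [add_sub_cancel_right] at hle
  rw [← ENNReal.ofReal_mul (by positivity)]
  refine ENNReal.ofReal_le_ofReal (hle.trans ?_)
  gcongr
  · exact tailInvPow_nonneg _ _ (norm_nonneg _)
  · exact le_add_of_nonneg_right hc

lemma lintegral_ofReal_tailInvPow_euclideanSpace [Nonempty ι] {p : ℕ} (hp : Fintype.card ι < p)
    {a : ℝ} (ha : 0 < a) :
    ∫⁻ x : EuclideanSpace ℝ ι, ENNReal.ofReal (tailInvPow p a ‖x‖) =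
      ENNReal.ofReal (latticeTailConst ι p * (a ^ (p - Fintype.card ι))⁻¹) := by
  have hp' : Module.finrank ℝ (EuclideanSpace ℝ ι) < p := by rwa [finrank_euclideanSpace]
  rw [lintegral_ofReal_tailInvPow_norm volume hp' ha, finrank_euclideanSpace, latticeTailConst]

lemma summable_tailInvPow_intVec [Nonempty ι] {p : ℕ} (hp : Fintype.card ι < p) {R : ℝ}
    (hR : √(Fintype.card ι) < R) : Summable fun k : ι → ℤ => tailInvPow p R ‖intVec k‖ := by
  have hR0 : 0 < R := (sqrt_nonneg _).trans_lt hR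
  have hT := tsum_ofReal_tailInvPow_le_mul_lintegral (p := p) hR0 hR.le
  rw [lintegral_ofReal_tailInvPow_euclideanSpace hp (sub_pos.mpr hR)] at hT
  have := ENNReal.summable_toReal (ne_top_of_le_ne_top
    (ENNReal.mul_ne_top ENNReal.ofReal_ne_top ENNReal.ofReal_ne_top) hT)
  simpa only [ENNReal.toReal_ofReal (tailInvPow_nonneg _ _ (norm_nonneg _))] using this

lemma ofReal_latticeTailSum [Nonempty ι] {p : ℕ} (hp : Fintype.card ι < p) {R : ℝ}
    (hR : √(Fintype.card ι) < R) :
    ENNReal.ofReal (latticeTailSum ι p R) =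
      ∑' k : ι → ℤ, ENNReal.ofReal (tailInvPow p R ‖intVec k‖) :=
  ENNReal.ofReal_tsum_of_nonneg (fun _ => tailInvPow_nonneg _ _ (norm_nonneg _))
    (summable_tailInvPow_intVec hp hR)

lemma latticeTailSum_le [Nonempty ι] {p : ℕ} (hp : Fintype.card ι < p) {R : ℝ}
    (hR : √(Fintype.card ι) < R) :
    latticeTailSum ι p R ≤ (1 + √(Fintype.card ι) / R) ^ p *
      (latticeTailConst ι p * ((R - √(Fintype.card ι)) ^ (p - Fintype.card ι))⁻¹) := by
  have hR0 : 0 < R := (sqrt_nonneg _).trans_lt hR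
  have hT := tsum_ofReal_tailInvPow_le_mul_lintegral (p := p) hR0 hR.le
  rw [← ofReal_latticeTailSum hp hR, lintegral_ofReal_tailInvPow_euclideanSpace hp
    (sub_pos.mpr hR), ← ENNReal.ofReal_mul (by positivity)] at hT
  exact (ENNReal.ofReal_le_ofReal_iff (mul_nonneg (by positivity)
    (mul_nonneg (latticeTailConst_nonneg p) (by positivity)))).mp hT

lemma le_latticeTailSum [Nonempty ι] {p : ℕ} (hp : Fintype.card ι < p) {R : ℝ}
    (hR : √(Fintype.card ι) < R) :
    latticeTailConst ι p * ((R + √(Fintype.card ι)) ^ (p - Fintype.card ι))⁻¹ ≤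
      (1 + √(Fintype.card ι) / R) ^ p * latticeTailSum ι p R := by
  have hR0 : 0 < R := (sqrt_nonneg _).trans_lt hR
  have hT := lintegral_ofReal_tailInvPow_le_mul_tsum (ι := ι) (p := p) hR0
  rw [← ofReal_latticeTailSum hp hR, lintegral_ofReal_tailInvPow_euclideanSpace hp
    (by positivity), ← ENNReal.ofReal_mul (by positivity)] at hT
  exact (ENNReal.ofReal_le_ofReal_iff (mul_nonneg (by positivity)
    (tsum_nonneg fun _ => tailInvPow_nonneg _ _ (norm_nonneg _)))).mp hT

lemma tendsto_pow_mul_latticeTailSum [Nonempty ι] {p : ℕ} (hp : Fintype.card ι < p) :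
    Tendsto (fun R => R ^ (p - Fintype.card ι) * latticeTailSum ι p R) atTop
      (𝓝 (latticeTailConst ι p)) := by
  set c := √(Fintype.card ι)
  set q := p - Fintype.card ι
  set K := latticeTailConst ι p
  have ht : Tendsto (fun R : ℝ => c / R) atTop (𝓝 0) := tendsto_const_nhds.div_atTop tendsto_id
  have hplus : Tendsto (fun R : ℝ => 1 + c / R) atTop (𝓝 1) := by
    simpa using (tendsto_const_nhds (x := (1 : ℝ))).add ht
  have hminus : Tendsto (fun R : ℝ => 1 - c / R) atTop (𝓝 1) := by
    simpa using (tendsto_const_nhds (x := (1 : ℝ))).sub ht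
  have hlo : Tendsto (fun R => K * ((1 + c / R) ^ q)⁻¹ * ((1 + c / R) ^ p)⁻¹) atTop (𝓝 K) := by
    simpa using (tendsto_const_nhds.mul ((hplus.pow q).inv₀ (by simp))).mul
      ((hplus.pow p).inv₀ (by simp))
  have hhi : Tendsto (fun R => (1 + c / R) ^ p * (K * ((1 - c / R) ^ q)⁻¹)) atTop (𝓝 K) := by
    simpa using (hplus.pow p).mul (tendsto_const_nhds.mul ((hminus.pow q).inv₀ (by simp)))
  refine tendsto_of_tendsto_of_tendsto_of_le_of_le' hlo hhi ?_ ?_ <;>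
    filter_upwards [eventually_gt_atTop c] with R hR <;>
    have hR0 : 0 < R := (sqrt_nonneg _).trans_lt hR
  · have hRc : R + c = R * (1 + c / R) := by field_simp
    rw [← div_eq_mul_inv, div_le_iff₀ (by positivity)]
    calc K * ((1 + c / R) ^ q)⁻¹ = R ^ q * (K * ((R + c) ^ q)⁻¹) := by
          rw [hRc, mul_pow]; field_simp
      _ ≤ R ^ q * ((1 + c / R) ^ p * latticeTailSum ι p R) :=
          mul_le_mul_of_nonneg_left (le_latticeTailSum hp hR) (by positivity)
      _ = _ := by ring
  · have hRc : R - c = R * (1 - c / R) := by field_simp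
    have : 0 < 1 - c / R := by rw [sub_pos, div_lt_one hR0]; exact hR
    calc R ^ q * latticeTailSum ι p R
        ≤ R ^ q * ((1 + c / R) ^ p * (K * ((R - c) ^ q)⁻¹)) :=
          mul_le_mul_of_nonneg_left (latticeTailSum_le hp hR) (by positivity)
      _ = _ := by rw [hRc, mul_pow]; field_simp

end LatticeTail

lemma latticeNorm_eq_two_pi_mul_norm_intVec (k : Fin 3 → ℤ) :
    latticeNorm k = 2 * π * ‖intVec k‖ := by
  simp [latticeNorm, intVec, EuclideanSpace.norm_eq]

lemma latticeTailConst_fin_three_four : latticeTailConst (Fin 3) 4 = 4 * π := by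
  rw [latticeTailConst, Measure.real, EuclideanSpace.volume_ball_fin_three,
    ENNReal.toReal_mul, ENNReal.toReal_pow, ENNReal.toReal_ofReal zero_le_one,
    ENNReal.toReal_ofReal (by positivity)]
  norm_num
  ring

/-- Decay of the tail sums of `1/|k|⁴` over the momentum lattice `(2πℤ)³`:
`Λ · Σ_{|k| > Λ} 1/|k|⁴ → 1/(2π²)` as `Λ → ∞`. -/
theorem lattice_tail_sum_inv_pow_four_asymptotics :
    Tendsto
      (fun Λ : ℝ => Λ *
        ∑' k : Fin 3 → ℤ, if Λ < latticeNorm k then 1 / latticeNorm k ^ 4 else 0)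
      atTop (nhds (1 / (2 * π ^ 2))) := by
  have h2π : 0 < 2 * π := by positivity
  have hlim := ((tendsto_pow_mul_latticeTailSum (ι := Fin 3) (p := 4) (by simp)).comp
    (tendsto_id.atTop_div_const h2π)).const_mul ((2 * π) ^ 3)⁻¹
  rw [latticeTailConst_fin_three_four,
    show ((2 * π) ^ 3)⁻¹ * (4 * π) = 1 / (2 * π ^ 2) by field_simp; ring] at hlim
  refine hlim.congr fun Λ => ?_
  have hterm (k : Fin 3 → ℤ) : (if Λ < latticeNorm k then 1 / latticeNorm k ^ 4 else 0) =
      ((2 * π) ^ 4)⁻¹ * tailInvPow 4 (Λ / (2 * π)) ‖intVec k‖ := by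
    rw [latticeNorm_eq_two_pi_mul_norm_intVec, ← tailInvPow_mul_mul h2π,
      mul_div_cancel₀ _ h2π.ne', tailInvPow, one_div]
  simp only [Function.comp_apply, id, hterm, tsum_mul_left, latticeTailSum, Fintype.card_fin,
    Nat.reduceSub, pow_one]
  field_simp
end
end
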